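/- arXiv:2605.00614 — 2 statements merged into one kernel-verified Lean document; each statement's English description precedes it below -/
import Mathlib

section
/- Let A be an N×T matrix, λ an N×p matrix, and F a T×q matrix. Then Tr(M_λ A M_F A') ≥ Σ_{r=p+q+1}^{T} μ_r(A'A). -/
open Matrix MeasureTheory
open scoped BigOperators

/-- Squared Frobenius (Hilbert–Schmidt) norm of a real matrix. -/
noncomputable def frobSq {n m : ℕ} (A : Matrix (Fin n) (Fin m) ℝ) : ℝ :=
  Matrix.trace (A * Aᵀ)

/-- Operator (spectral) norm of a real matrix. -/
noncomputable def opNorm {n m : ℕ} (A : Matrix (Fin n) (Fin m) ℝ) : ℝ :=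
  ‖LinearMap.toContinuousLinearMap (Matrix.toEuclideanLin A)‖

/-- Orthogonal projection matrix onto the column space of `A`. -/
noncomputable def projMat {n m : ℕ} (A : Matrix (Fin n) (Fin m) ℝ) : Matrix (Fin n) (Fin n) ℝ :=
  Matrix.toEuclideanLin.symm
    (((LinearMap.range (Matrix.toEuclideanLin A)).subtypeL.comp
      (Submodule.orthogonalProjectionOnto (LinearMap.range (Matrix.toEuclideanLin A))) :
        EuclideanSpace ℝ (Fin n) →L[ℝ] EuclideanSpace ℝ (Fin n)) :
        EuclideanSpace ℝ (Fin n) →ₗ[ℝ] EuclideanSpace ℝ (Fin n))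

/-- Annihilator `M_A = I - P_A`. -/
noncomputable def annMat {n m : ℕ} (A : Matrix (Fin n) (Fin m) ℝ) : Matrix (Fin n) (Fin n) ℝ :=
  1 - projMat A

/-- `mu S r` is the `r`-th largest eigenvalue (1-based, with multiplicity) of the
symmetric matrix `S`; it is `0` if `S` is not symmetric or `r ∉ {1,…,n}`. -/
noncomputable def mu {n : ℕ} (S : Matrix (Fin n) (Fin n) ℝ) (r : ℕ) : ℝ :=
  if h : S.IsHermitian ∧ 1 ≤ r ∧ r ≤ n then
    (h.1.eigenvalues ∘ Tuple.sort h.1.eigenvalues)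
      (Fin.rev ⟨r - 1, by obtain ⟨-, h1, h2⟩ := h; omega⟩)
  else 0

/-! With `B = M_λ A M_F`, the left side is `tr (B'B)`. Let `U` be the span of the columns of
`A'λ` and of `F`, so `dim U ≤ p + q`, and let `Q` be the projection onto `Uᗮ`. Both terms of
`A - B = P_λ A + M_λ A P_F` vanish on `Uᗮ`, so `BQ = AQ` and
`tr (B'B) ≥ tr (Q B'B Q) = tr (A'A Q)`.

Writing `A'A = V D V'`, `tr (A'A Q) = ∑ dᵢ cᵢ` where the `cᵢ` are the diagonal entries of the
projection `V'QV`: they lie in `[0, 1]` and sum to `tr Q ≥ T - p - q`. With `dᵢ ≥ 0`, such a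
weighted sum is smallest when the weight sits on the `T - p - q` smallest eigenvalues
(Ky Fan's minimum principle). -/

section RealMatrix

open scoped MatrixOrder

variable {ι κ : Type*} [Fintype ι] [Fintype κ]

lemma IsStarProjection.transpose_eq {P : Matrix ι ι ℝ} (hP : IsStarProjection P) : Pᵀ = P := by
  rw [← conjTranspose_eq_transpose_of_trivial, ← star_eq_conjTranspose, hP.isSelfAdjoint.star_eq]

lemma IsStarProjection.diag_mem_Icc {P : Matrix ι ι ℝ} (hP : IsStarProjection P) (i : ι) :
    P i i ∈ Set.Icc 0 1 := by
  classical
  have h₀ := (nonneg_iff_posSemidef.mp hP.nonneg).diag_nonneg (i := i)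
  have h₁ := (nonneg_iff_posSemidef.mp hP.one_sub.nonneg).diag_nonneg (i := i)
  rw [Matrix.sub_apply, one_apply_eq] at h₁
  exact ⟨h₀, by linarith⟩

lemma posSemidef_transpose_mul_self (B : Matrix κ ι ℝ) : (Bᵀ * B).PosSemidef := by
  simpa only [conjTranspose_eq_transpose_of_trivial] using posSemidef_conjTranspose_mul_self B

lemma trace_transpose_mul_self_mul_of_isStarProjection {Q : Matrix ι ι ℝ}
    (hQ : IsStarProjection Q) (B : Matrix κ ι ℝ) :
    (Bᵀ * B * Q).trace = ((B * Q)ᵀ * (B * Q)).trace := by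
  rw [transpose_mul, hQ.transpose_eq]
  simp only [Matrix.mul_assoc]
  rw [trace_mul_comm Q]
  simp only [Matrix.mul_assoc]
  rw [hQ.isIdempotentElem.eq]

lemma trace_transpose_mul_self_mul_le {Q : Matrix ι ι ℝ} (hQ : IsStarProjection Q)
    (B : Matrix κ ι ℝ) : (Bᵀ * B * Q).trace ≤ (Bᵀ * B).trace := by
  classical
  have h := trace_transpose_mul_self_mul_of_isStarProjection hQ.one_sub B
  rw [Matrix.mul_sub, Matrix.mul_one, trace_sub] at h
  linarith [(posSemidef_transpose_mul_self (B * (1 - Q))).trace_nonneg]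

lemma trace_mul_mul_mul_transpose_of_isStarProjection {P : Matrix κ κ ℝ} {Q : Matrix ι ι ℝ}
    (hP : IsStarProjection P) (hQ : IsStarProjection Q) (A : Matrix κ ι ℝ) :
    (P * A * Q * Aᵀ).trace = ((P * A * Q)ᵀ * (P * A * Q)).trace := by
  rw [← trace_transpose_mul_self_mul_of_isStarProjection hQ, transpose_mul, hP.transpose_eq,
    trace_mul_comm _ Aᵀ]
  simp only [Matrix.mul_assoc]
  rw [← Matrix.mul_assoc P P, hP.isIdempotentElem.eq]

end RealMatrix

section ProjMatrix

variable {ι : Type*} [Fintype ι] [DecidableEq ι]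

noncomputable def projMatrix (U : Submodule ℝ (EuclideanSpace ℝ ι)) : Matrix ι ι ℝ :=
  (toEuclideanCLM (𝕜 := ℝ)).symm U.starProjection

lemma projMat_eq_projMatrix {n m : ℕ} (A : Matrix (Fin n) (Fin m) ℝ) :
    projMat A = projMatrix (LinearMap.range (toEuclideanLin A)) :=
  rfl

lemma toEuclideanLin_projMatrix (U : Submodule ℝ (EuclideanSpace ℝ ι)) :
    toEuclideanLin (projMatrix U) = U.starProjection := by
  rw [projMatrix, ← coe_toEuclideanCLM_eq_toEuclideanLin, StarAlgEquiv.apply_symm_apply]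

lemma isStarProjection_projMatrix (U : Submodule ℝ (EuclideanSpace ℝ ι)) :
    IsStarProjection (projMatrix U) :=
  IsStarProjection.map (F := (EuclideanSpace ℝ ι →L[ℝ] EuclideanSpace ℝ ι) ≃⋆ₐ[ℝ] Matrix ι ι ℝ)
    isStarProjection_starProjection toEuclideanCLM.symm

lemma isStarProjection_projMat {n m : ℕ} (A : Matrix (Fin n) (Fin m) ℝ) :
    IsStarProjection (projMat A) :=
  isStarProjection_projMatrix _

lemma range_toEuclideanLin_projMatrix (U : Submodule ℝ (EuclideanSpace ℝ ι)) :
    LinearMap.range (toEuclideanLin (projMatrix U)) = U := by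
  rw [toEuclideanLin_projMatrix]
  exact U.range_starProjection

lemma trace_projMatrix (U : Submodule ℝ (EuclideanSpace ℝ ι)) :
    (projMatrix U).trace = Module.finrank ℝ U := by
  rw [← trace_toLin_eq _ (PiLp.basisFun 2 ℝ ι), ← toLpLin_eq_toLin,
    toEuclideanLin_projMatrix]
  exact LinearMap.IsProj.trace ⟨U.starProjection_apply_mem,
    fun _ hx => Submodule.starProjection_eq_self_iff.mpr hx⟩

lemma mul_one_sub_projMatrix_eq_zero {κ : Type*} [Fintype κ] [DecidableEq κ]
    {U : Submodule ℝ (EuclideanSpace ℝ ι)} {X : Matrix κ ι ℝ}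
    (hX : LinearMap.range (toEuclideanLin Xᵀ) ≤ U) : X * (1 - projMatrix U) = 0 := by
  suffices projMatrix U * Xᵀ = Xᵀ by
    rw [Matrix.mul_sub, Matrix.mul_one, sub_eq_zero, ← transpose_transpose (X * _), transpose_mul,
      (isStarProjection_projMatrix U).transpose_eq, this, transpose_transpose]
  refine toEuclideanLin.injective (LinearMap.ext fun x => ?_)
  rw [toLpLin_mul_same, LinearMap.comp_apply, toEuclideanLin_projMatrix]
  exact Submodule.starProjection_eq_self_iff.mpr (hX ⟨x, rfl⟩)

lemma natCast_sub_le_trace_one_sub_projMatrix {n k : ℕ}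
    {U : Submodule ℝ (EuclideanSpace ℝ (Fin n))} (hU : Module.finrank ℝ U ≤ k) :
    ((n - k : ℕ) : ℝ) ≤ (1 - projMatrix U).trace := by
  have hUn : Module.finrank ℝ U ≤ n :=
    (Submodule.finrank_le U).trans_eq finrank_euclideanSpace_fin
  have : ((n - k : ℕ) : ℝ) + Module.finrank ℝ U ≤ n := by exact_mod_cast (by omega)
  rw [trace_sub, trace_one, trace_projMatrix, Fintype.card_fin]
  linarith

lemma finrank_range_sup_range_le {n p q : ℕ} (X : Matrix (Fin n) (Fin p) ℝ)
    (Y : Matrix (Fin n) (Fin q) ℝ) :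
    Module.finrank ℝ ↥(LinearMap.range (toEuclideanLin X) ⊔ LinearMap.range (toEuclideanLin Y)) ≤
      p + q := by
  have hX := LinearMap.finrank_range_le (toEuclideanLin X)
  have hY := LinearMap.finrank_range_le (toEuclideanLin Y)
  rw [finrank_euclideanSpace_fin] at hX hY
  exact (Submodule.finrank_add_le_finrank_add_finrank _ _).trans (add_le_add hX hY)

lemma annMat_mul_mul_annMat_mul_one_sub_projMatrix {N T p q : ℕ} {A : Matrix (Fin N) (Fin T) ℝ}
    {lam : Matrix (Fin N) (Fin p) ℝ} {F : Matrix (Fin T) (Fin q) ℝ}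
    {U : Submodule ℝ (EuclideanSpace ℝ (Fin T))}
    (hlam : LinearMap.range (toEuclideanLin (Aᵀ * lam)) ≤ U)
    (hF : LinearMap.range (toEuclideanLin F) ≤ U) :
    annMat lam * A * annMat F * (1 - projMatrix U) = A * (1 - projMatrix U) := by
  have hPlamAQ : projMat lam * A * (1 - projMatrix U) = 0 := by
    refine mul_one_sub_projMatrix_eq_zero (le_trans ?_ hlam)
    rw [transpose_mul, (isStarProjection_projMat lam).transpose_eq, toLpLin_mul_same,
      toLpLin_mul_same, LinearMap.range_comp, LinearMap.range_comp, projMat_eq_projMatrix,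
      range_toEuclideanLin_projMatrix]
  have hPFQ : projMat F * (1 - projMatrix U) = 0 := by
    refine mul_one_sub_projMatrix_eq_zero (le_trans ?_ hF)
    rw [(isStarProjection_projMat F).transpose_eq, projMat_eq_projMatrix,
      range_toEuclideanLin_projMatrix]
  simp only [annMat, Matrix.mul_assoc, Matrix.sub_mul, Matrix.one_mul, hPFQ, sub_zero]
  rw [← Matrix.mul_assoc, hPlamAQ, sub_zero]

end ProjMatrix

section KyFan

open Finset

variable {ι : Type*} [Fintype ι] [DecidableEq ι]

lemma Finset.sum_le_sum_mul_of_card_le_sum {g c : ι → ℝ} {s : Finset ι} (hg : ∀ i, 0 ≤ g i)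
    (hs : ∀ i ∈ s, ∀ j ∉ s, g i ≤ g j) (hc : ∀ i, c i ∈ Set.Icc 0 1) (hcard : (#s : ℝ) ≤ ∑ i, c i) :
    ∑ i ∈ s, g i ≤ ∑ i, g i * c i := by
  obtain rfl | hne := s.eq_empty_or_nonempty
  · simpa using sum_nonneg fun i _ => mul_nonneg (hg i) (hc i).1
  set v := s.sup' hne g
  have hv_ge : ∀ i ∈ s, g i ≤ v := fun i hi => le_sup' g hi
  have hv_le : ∀ j ∉ s, v ≤ g j := fun j hj => sup'_le hne g fun i hi => hs i hi j hj
  have hv : 0 ≤ v := (hg _).trans (hv_ge _ hne.choose_spec)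
  have hcard' : (#s : ℝ) - ∑ i ∈ s, c i ≤ ∑ i ∈ sᶜ, c i := by
    rw [← sum_add_sum_compl s c] at hcard; linarith
  calc ∑ i ∈ s, g i = ∑ i ∈ s, g i * c i + ∑ i ∈ s, g i * (1 - c i) := by
        rw [← sum_add_distrib]; exact sum_congr rfl fun i _ => by ring
    _ ≤ ∑ i ∈ s, g i * c i + ∑ i ∈ s, v * (1 - c i) := by
        gcongr with i hi
        · exact sub_nonneg.mpr (hc i).2
        · exact hv_ge i hi
    _ = ∑ i ∈ s, g i * c i + v * (#s - ∑ i ∈ s, c i) := by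
        rw [← mul_sum, sum_sub_distrib, sum_const, nsmul_one]
    _ ≤ ∑ i ∈ s, g i * c i + ∑ i ∈ sᶜ, g i * c i := by
        gcongr
        calc v * (#s - ∑ i ∈ s, c i) ≤ v * ∑ i ∈ sᶜ, c i := by gcongr
          _ = ∑ i ∈ sᶜ, v * c i := mul_sum _ _ _
          _ ≤ ∑ i ∈ sᶜ, g i * c i := by
              gcongr with i hi
              · exact (hc i).1
              · exact hv_le i (mem_compl.mp hi)
    _ = ∑ i, g i * c i := sum_add_sum_compl s _

lemma Matrix.PosSemidef.sum_eigenvalues_le_trace_mul {S Q : Matrix ι ι ℝ} (hS : S.PosSemidef)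
    (hQ : IsStarProjection Q) {s : Finset ι}
    (hs : ∀ i ∈ s, ∀ j ∉ s, hS.isHermitian.eigenvalues i ≤ hS.isHermitian.eigenvalues j)
    (hcard : (#s : ℝ) ≤ Q.trace) :
    ∑ i ∈ s, hS.isHermitian.eigenvalues i ≤ (S * Q).trace := by
  set U : Matrix ι ι ℝ := (hS.isHermitian.eigenvectorUnitary : Matrix ι ι ℝ)
  set C := star U * Q * U
  have hC : IsStarProjection C := by
    simpa [C, Unitary.conjStarAlgAut_apply] using
      hQ.map (Unitary.conjStarAlgAut ℝ _ (star hS.isHermitian.eigenvectorUnitary))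
  have htrC : C.trace = Q.trace := by
    rw [trace_mul_cycle, Unitary.mul_star_self_of_mem hS.isHermitian.eigenvectorUnitary.2,
      Matrix.one_mul]
  have htrSQ : (S * Q).trace = ∑ i, hS.isHermitian.eigenvalues i * C i i := by
    conv_lhs => rw [hS.isHermitian.spectral_theorem, Unitary.conjStarAlgAut_apply]
    simp only [Matrix.mul_assoc]
    rw [trace_mul_comm U]
    simp only [Matrix.mul_assoc, C, trace, diag, diagonal_mul]
    rfl
  rw [htrSQ]
  exact sum_le_sum_mul_of_card_le_sum hS.eigenvalues_nonneg hs hC.diag_mem_Icc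
    (hcard.trans_eq htrC.symm)

end KyFan

section SortedEigenvalues

open Finset

variable {n : ℕ} {S : Matrix (Fin n) (Fin n) ℝ}

lemma mu_sub_val (hS : S.IsHermitian) (a : Fin n) :
    mu S (n - a) = hS.eigenvalues (Tuple.sort hS.eigenvalues a) := by
  rw [mu, dif_pos ⟨hS, by omega, by omega⟩]
  exact congrArg (hS.eigenvalues ∘ Tuple.sort hS.eigenvalues)
    (Fin.ext (by simp only [Fin.val_rev]; omega))

lemma sum_Icc_mu_eq (hS : S.IsHermitian) (k : ℕ) :
    ∑ r ∈ Icc (k + 1) n, mu S r =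
      ∑ i ∈ ({a : Fin n | a < n - k} : Finset (Fin n)).map (Tuple.sort hS.eigenvalues).toEmbedding,
        hS.eigenvalues i := by
  have hIcc : Icc (k + 1) n =
      ({a : Fin n | a < n - k} : Finset (Fin n)).image fun a : Fin n => n - (a : ℕ) := by
    ext r
    simp only [mem_Icc, mem_image, mem_filter, mem_univ, true_and]
    refine ⟨fun hr => ⟨⟨n - r, by omega⟩, by simp only; omega, by simp only; omega⟩, ?_⟩
    rintro ⟨a, ha, rfl⟩
    omega
  rw [hIcc, sum_image fun a _ b _ hab => Fin.ext (by omega), sum_map]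
  exact sum_congr rfl fun a _ => mu_sub_val hS a

lemma Matrix.PosSemidef.sum_Icc_mu_le_trace_mul {Q : Matrix (Fin n) (Fin n) ℝ} (hS : S.PosSemidef)
    (hQ : IsStarProjection Q) {k : ℕ} (hk : ((n - k : ℕ) : ℝ) ≤ Q.trace) :
    ∑ r ∈ Icc (k + 1) n, mu S r ≤ (S * Q).trace := by
  rw [sum_Icc_mu_eq hS.isHermitian]
  refine hS.sum_eigenvalues_le_trace_mul hQ ?_ ?_
  · simp only [mem_map_equiv, mem_filter, mem_univ, true_and, not_lt]
    intro i hi j hj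
    have h := Tuple.monotone_sort hS.isHermitian.eigenvalues (hi.le.trans hj)
    simpa only [Function.comp_apply, Equiv.apply_symm_apply] using h
  · rwa [card_map, Fin.card_filter_val_lt, min_eq_right (Nat.sub_le n k)]

end SortedEigenvalues

/-- Tr(M_λ A M_F A') ≥ Σ_{r=p+q+1}^{T} μ_r(A'A). -/
theorem statement4 {N T p q : ℕ} (A : Matrix (Fin N) (Fin T) ℝ)
    (lam : Matrix (Fin N) (Fin p) ℝ) (F : Matrix (Fin T) (Fin q) ℝ) :
    Matrix.trace (annMat lam * A * annMat F * Aᵀ) ≥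
      ∑ r ∈ Finset.Icc (p + q + 1) T, mu (Aᵀ * A) r := by
  set U := LinearMap.range (toEuclideanLin (Aᵀ * lam)) ⊔ LinearMap.range (toEuclideanLin F)
  set Q := 1 - projMatrix U
  set B := annMat lam * A * annMat F
  have hQ : IsStarProjection Q := (isStarProjection_projMatrix U).one_sub
  have hBQ : B * Q = A * Q := annMat_mul_mul_annMat_mul_one_sub_projMatrix le_sup_left le_sup_right
  have hdim : ((T - (p + q) : ℕ) : ℝ) ≤ Q.trace :=
    natCast_sub_le_trace_one_sub_projMatrix (finrank_range_sup_range_le _ _)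
  rw [ge_iff_le]
  calc ∑ r ∈ Finset.Icc (p + q + 1) T, mu (Aᵀ * A) r ≤ (Aᵀ * A * Q).trace :=
        (posSemidef_transpose_mul_self A).sum_Icc_mu_le_trace_mul hQ hdim
    _ = (Bᵀ * B * Q).trace := by
        rw [trace_transpose_mul_self_mul_of_isStarProjection hQ, ← hBQ,
          trace_transpose_mul_self_mul_of_isStarProjection hQ]
    _ ≤ (Bᵀ * B).trace := trace_transpose_mul_self_mul_le hQ B
    _ = (annMat lam * A * annMat F * Aᵀ).trace :=
        (trace_mul_mul_mul_transpose_of_isStarProjection (isStarProjection_projMat lam).one_sub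
          (isStarProjection_projMat F).one_sub A).symm
end

section
/- Let A and B be symmetric n×n matrices. Let μ_1(A) ≥ … ≥ μ_n(A) be the eigenvalues of A with corresponding orthonormal eigenvectors ν_1,…,ν_n, and set b = max_{i,j=1,…,n} |ν_i' B ν_j|. Then for every r ∈ {1,…,n}, μ_r(A+B) ≥ μ_r(A) − r·b. -/
open Matrix MeasureTheory
open scoped BigOperators

/-! A Courant–Fischer argument. On `V = span(ν₁, …, νᵣ)` the Rayleigh quotient of `A` is at least
`μᵣ(A)`, and that of `B` is at least `-r b`, since `x'Bx = ∑ cᵢ cⱼ νᵢ'Bνⱼ` is bounded by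
`b (∑ |cᵢ|)² ≤ r b ∑ cᵢ²`. As `dim V = r`, `V` meets the span of the eigenvectors of `A + B`
for its `n - r + 1` smallest eigenvalues in some `x ≠ 0`, where the quotient of `A + B` is at
most `μᵣ(A + B)`. -/

section OrthonormalFamily

variable {m ι : Type*} [Fintype m] [Fintype ι] [DecidableEq ι] {f : ι → m → ℝ}

lemma sum_smul_dotProduct_of_orthonormal
    (hf : ∀ i j, f i ⬝ᵥ f j = if i = j then 1 else 0) (c : ι → ℝ) (i : ι) :
    (∑ j, c j • f j) ⬝ᵥ f i = c i := by
  simp [sum_dotProduct, smul_dotProduct, hf]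

lemma linearIndependent_of_orthonormal
    (hf : ∀ i j, f i ⬝ᵥ f j = if i = j then 1 else 0) : LinearIndependent ℝ f := by
  rw [Fintype.linearIndependent_iff]
  intro c hc i
  simpa [hc] using (sum_smul_dotProduct_of_orthonormal hf c i).symm

lemma sum_smul_dotProduct_sum_smul_of_orthonormal
    (hf : ∀ i j, f i ⬝ᵥ f j = if i = j then 1 else 0) (c : ι → ℝ) :
    (∑ j, c j • f j) ⬝ᵥ (∑ j, c j • f j) = ∑ j, c j ^ 2 := by
  simp [dotProduct_sum, dotProduct_smul, sum_smul_dotProduct_of_orthonormal hf, sq]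

lemma sum_smul_dotProduct_mulVec_of_eigen
    (hf : ∀ i j, f i ⬝ᵥ f j = if i = j then 1 else 0) {M : Matrix m m ℝ} {t : ι → ℝ}
    (hM : ∀ j, M *ᵥ f j = t j • f j) (c : ι → ℝ) :
    (∑ j, c j • f j) ⬝ᵥ M *ᵥ (∑ j, c j • f j) = ∑ j, t j * c j ^ 2 := by
  simp only [mulVec_sum, mulVec_smul, hM, smul_smul, dotProduct_sum, dotProduct_smul,
    sum_smul_dotProduct_of_orthonormal hf, smul_eq_mul]
  exact Finset.sum_congr rfl fun j _ => by ring

lemma le_sum_smul_dotProduct_mulVec_of_eigen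
    (hf : ∀ i j, f i ⬝ᵥ f j = if i = j then 1 else 0) {M : Matrix m m ℝ} {t : ι → ℝ}
    (hM : ∀ j, M *ᵥ f j = t j • f j) {a : ℝ} (ht : ∀ j, a ≤ t j) (c : ι → ℝ) :
    a * ((∑ j, c j • f j) ⬝ᵥ (∑ j, c j • f j)) ≤
      (∑ j, c j • f j) ⬝ᵥ M *ᵥ (∑ j, c j • f j) := by
  rw [sum_smul_dotProduct_mulVec_of_eigen hf hM, sum_smul_dotProduct_sum_smul_of_orthonormal hf,
    Finset.mul_sum]
  exact Finset.sum_le_sum fun j _ => mul_le_mul_of_nonneg_right (ht j) (sq_nonneg _)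

lemma sum_smul_dotProduct_mulVec_le_of_eigen
    (hf : ∀ i j, f i ⬝ᵥ f j = if i = j then 1 else 0) {M : Matrix m m ℝ} {t : ι → ℝ}
    (hM : ∀ j, M *ᵥ f j = t j • f j) {a : ℝ} (ht : ∀ j, t j ≤ a) (c : ι → ℝ) :
    (∑ j, c j • f j) ⬝ᵥ M *ᵥ (∑ j, c j • f j) ≤
      a * ((∑ j, c j • f j) ⬝ᵥ (∑ j, c j • f j)) := by
  rw [sum_smul_dotProduct_mulVec_of_eigen hf hM, sum_smul_dotProduct_sum_smul_of_orthonormal hf,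
    Finset.mul_sum]
  exact Finset.sum_le_sum fun j _ => mul_le_mul_of_nonneg_right (ht j) (sq_nonneg _)

lemma neg_card_mul_le_sum_smul_dotProduct_mulVec
    (hf : ∀ i j, f i ⬝ᵥ f j = if i = j then 1 else 0) (B : Matrix m m ℝ) {b : ℝ} (hb : 0 ≤ b)
    (hB : ∀ i j, |f i ⬝ᵥ B *ᵥ f j| ≤ b) (c : ι → ℝ) :
    -(Fintype.card ι * b) * ((∑ j, c j • f j) ⬝ᵥ (∑ j, c j • f j)) ≤
      (∑ j, c j • f j) ⬝ᵥ B *ᵥ (∑ j, c j • f j) := by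
  have hexpand : (∑ j, c j • f j) ⬝ᵥ B *ᵥ (∑ j, c j • f j) =
      ∑ i, ∑ j, c i * c j * (f i ⬝ᵥ B *ᵥ f j) := by
    simp only [mulVec_sum, mulVec_smul, dotProduct_sum, sum_dotProduct, dotProduct_smul,
      smul_dotProduct, smul_eq_mul, Finset.mul_sum]
    rw [Finset.sum_comm]
    exact Finset.sum_congr rfl fun i _ => Finset.sum_congr rfl fun j _ => by ring
  have habs : |(∑ j, c j • f j) ⬝ᵥ B *ᵥ (∑ j, c j • f j)| ≤ b * (∑ i, |c i|) ^ 2 := by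
    rw [hexpand, sq, Finset.sum_mul_sum, Finset.mul_sum]
    refine (Finset.abs_sum_le_sum_abs _ _).trans (Finset.sum_le_sum fun i _ => ?_)
    rw [Finset.mul_sum]
    refine (Finset.abs_sum_le_sum_abs _ _).trans (Finset.sum_le_sum fun j _ => ?_)
    rw [abs_mul, abs_mul, mul_comm b]
    exact mul_le_mul_of_nonneg_left (hB i j) (by positivity)
  have hcs : (∑ i, |c i|) ^ 2 ≤ Fintype.card ι * ∑ i, c i ^ 2 := by
    simpa using sq_sum_le_card_mul_sum_sq (s := Finset.univ) (f := fun i => |c i|)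
  rw [sum_smul_dotProduct_sum_smul_of_orthonormal hf]
  nlinarith [neg_abs_le ((∑ j, c j • f j) ⬝ᵥ B *ᵥ (∑ j, c j • f j)),
    mul_le_mul_of_nonneg_left hcs hb]

end OrthonormalFamily

section SortedSpectrum

variable {n : ℕ} {S : Matrix (Fin n) (Fin n) ℝ}

lemma mu_eq_eigenvalues_sort (hS : S.IsHermitian) {r : ℕ} (hr1 : 1 ≤ r) (hrn : r ≤ n) :
    mu S r = hS.eigenvalues (Tuple.sort hS.eigenvalues ⟨n - r, by omega⟩) := by
  rw [mu, dif_pos ⟨hS, hr1, hrn⟩, Function.comp_apply]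
  congr
  ext
  simp only [Fin.val_rev]
  omega

lemma mu_antitone (hS : S.IsHermitian) {i j : ℕ} (hi : 1 ≤ i) (hij : i ≤ j) (hj : j ≤ n) :
    mu S j ≤ mu S i := by
  rw [mu_eq_eigenvalues_sort hS (hi.trans hij) hj, mu_eq_eigenvalues_sort hS hi (hij.trans hj)]
  exact Tuple.monotone_sort hS.eigenvalues (Fin.mk_le_mk.mpr (by omega))

lemma eigenvectorBasis_dotProduct (hS : S.IsHermitian) (i j : Fin n) :
    ⇑(hS.eigenvectorBasis i) ⬝ᵥ ⇑(hS.eigenvectorBasis j) = if i = j then 1 else 0 := by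
  rw [dotProduct_comm]
  simpa [EuclideanSpace.inner_eq_star_dotProduct] using
    orthonormal_iff_ite.mp hS.eigenvectorBasis.orthonormal i j

/-- One half of the Courant–Fischer min-max theorem. -/
theorem le_mu_of_le_dotProduct_mulVec (hS : S.IsHermitian) {r : ℕ} (hr1 : 1 ≤ r) (hrn : r ≤ n)
    (V : Submodule ℝ (Fin n → ℝ)) (hV : r ≤ Module.finrank ℝ V) {a : ℝ}
    (ha : ∀ x ∈ V, a * (x ⬝ᵥ x) ≤ x ⬝ᵥ S *ᵥ x) : a ≤ mu S r := by
  set e : Fin (n - r + 1) → Fin n :=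
    fun k => Tuple.sort hS.eigenvalues (Fin.castLE (by omega) k)
  set g : Fin (n - r + 1) → Fin n → ℝ := fun k => hS.eigenvectorBasis (e k)
  have hsmall : ∀ k, hS.eigenvalues (e k) ≤ mu S r := fun k => by
    rw [mu_eq_eigenvalues_sort hS hr1 hrn]
    exact Tuple.monotone_sort hS.eigenvalues (Fin.le_iff_val_le_val.mpr k.is_le)
  have hg : ∀ k l, g k ⬝ᵥ g l = if k = l then 1 else 0 := by
    intro k l
    simp [g, e, eigenvectorBasis_dotProduct, (Fin.castLE_injective _).eq_iff]
  have hW : Module.finrank ℝ (Submodule.span ℝ (Set.range g)) = n - r + 1 := by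
    rw [finrank_span_eq_card (linearIndependent_of_orthonormal hg), Fintype.card_fin]
  obtain ⟨x, hxV, hxW, hx0⟩ : ∃ x ∈ V, x ∈ Submodule.span ℝ (Set.range g) ∧ x ≠ 0 := by
    by_contra! h
    have := Submodule.finrank_add_finrank_le_of_disjoint (Submodule.disjoint_def.mpr h)
    rw [hW, Module.finrank_fin_fun] at this
    omega
  obtain ⟨d, rfl⟩ := (Submodule.mem_span_range_iff_exists_fun ℝ).mp hxW
  have hupper := sum_smul_dotProduct_mulVec_le_of_eigen hg
    (fun k => hS.mulVec_eigenvectorBasis _) hsmall d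
  have hpos : 0 < (∑ k, d k • g k) ⬝ᵥ (∑ k, d k • g k) := by
    simpa using dotProduct_star_self_pos_iff.mpr hx0
  exact le_of_mul_le_mul_right ((ha _ hxV).trans hupper) hpos

end SortedSpectrum

/-- Let A, B be symmetric n×n matrices with orthonormal eigenvectors
ν_1,…,ν_n of A (for the decreasingly ordered eigenvalues) and b = max_{i,j} |ν_i' B ν_j|.
Then μ_r(A+B) ≥ μ_r(A) − r·b for every r ∈ {1,…,n}. -/
theorem statement9 {n : ℕ} (A B : Matrix (Fin n) (Fin n) ℝ)
    (hA : A.IsHermitian) (hB : B.IsHermitian)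
    (ν : ℕ → (Fin n → ℝ))
    (hortho : ∀ i ∈ Finset.Icc 1 n, ∀ j ∈ Finset.Icc 1 n,
      ν i ⬝ᵥ ν j = if i = j then (1 : ℝ) else 0)
    (heig : ∀ i ∈ Finset.Icc 1 n, A.mulVec (ν i) = mu A i • ν i)
    (b : ℝ)
    (hb : IsGreatest {x : ℝ | ∃ i ∈ Finset.Icc 1 n, ∃ j ∈ Finset.Icc 1 n,
      x = |ν i ⬝ᵥ B.mulVec (ν j)|} b) :
    ∀ r ∈ Finset.Icc 1 n, mu (A + B) r ≥ mu A r - (r : ℝ) * b := by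
  intro r hr
  obtain ⟨hr1, hrn⟩ := Finset.mem_Icc.mp hr
  set f : Fin r → Fin n → ℝ := fun i => ν (i + 1)
  have hmem : ∀ i : Fin r, (i : ℕ) + 1 ∈ Finset.Icc 1 n := fun i => by simp; omega
  have hf : ∀ i j, f i ⬝ᵥ f j = if i = j then 1 else 0 := fun i j => by
    simp [f, hortho _ (hmem i) _ (hmem j), Fin.val_inj]
  have hb0 : 0 ≤ b := by
    obtain ⟨_, _, _, _, rfl⟩ := hb.1
    exact abs_nonneg _
  have hbf : ∀ i j, |f i ⬝ᵥ B *ᵥ f j| ≤ b := fun i j => hb.2 ⟨_, hmem i, _, hmem j, rfl⟩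
  have hAf : ∀ i : Fin r, mu A r ≤ mu A (i + 1) := fun i => mu_antitone hA (by omega) (by omega) hrn
  refine le_mu_of_le_dotProduct_mulVec (hA.add hB) hr1 hrn (Submodule.span ℝ (Set.range f))
    (by rw [finrank_span_eq_card (linearIndependent_of_orthonormal hf), Fintype.card_fin]) ?_
  rintro _ hx
  obtain ⟨c, rfl⟩ := (Submodule.mem_span_range_iff_exists_fun ℝ).mp hx
  have hAx := le_sum_smul_dotProduct_mulVec_of_eigen hf (fun i => heig _ (hmem i)) hAf c
  have hBx := neg_card_mul_le_sum_smul_dotProduct_mulVec hf B hb0 hbf c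
  rw [Fintype.card_fin] at hBx
  rw [add_mulVec, dotProduct_add]
  linarith
end
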